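/- Let Q_d be the d-dimensional hypercube graph with d > 2. Then γ_gr^{L,d−1}(Q_d) = 2^d − 1 and γ_gr^{L,d−2}(Q_d) = 2^d − 2. -/

import Mathlib

/-- A sequence `S` of distinct vertices is a generalized `k`-Grundy sequence with respect to
neighborhood assignments `N₁` (where the footprinted vertex must lie relative to the new
vertex) and `N₂` (the neighborhoods of earlier vertices that must contain the footprinted
vertex fewer than `k` times): for each position `i` there is a vertex `u ∈ N₁ (S i)` that
belongs to `N₂ w` for fewer than `k` of the vertices `w` preceding position `i`. -/
def IsGrundySeq {V : Type*} (k : ℕ) (N₁ N₂ : V → Set V) (S : List V) : Prop :=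
  S.Nodup ∧ ∀ (i : ℕ) (hi : i < S.length),
    ∃ u ∈ N₁ (S.get ⟨i, hi⟩), {w | w ∈ S.take i ∧ u ∈ N₂ w}.ncard < k

/-- The length of a longest generalized `k`-Grundy sequence. -/
noncomputable def grundyVal {V : Type*} (k : ℕ) (N₁ N₂ : V → Set V) : ℕ :=
  sSup {m | ∃ S : List V, IsGrundySeq k N₁ N₂ S ∧ S.length = m}

/-- The closed neighborhood `N[v]` of a vertex. -/
def closedNbhd {V : Type*} (G : SimpleGraph V) (v : V) : Set V :=
  insert v (G.neighborSet v)

/-- The `k`-Grundy domination number `γ_gr^k(G)`. -/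
noncomputable def kGrundy {V : Type*} (G : SimpleGraph V) (k : ℕ) : ℕ :=
  grundyVal k (closedNbhd G) (closedNbhd G)

/-- The `k`-`L`-Grundy domination number `γ_gr^{L,k}(G)`. -/
noncomputable def kLGrundy {V : Type*} (G : SimpleGraph V) (k : ℕ) : ℕ :=
  grundyVal k (closedNbhd G) G.neighborSet

/-- The `k`-`Z`-Grundy domination number `γ_gr^{Z,k}(G)`. -/
noncomputable def kZGrundy {V : Type*} (G : SimpleGraph V) (k : ℕ) : ℕ :=
  grundyVal k G.neighborSet (closedNbhd G)

/-- The `k`-`t`-Grundy domination number `γ_gr^{t,k}(G)`. -/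
noncomputable def ktGrundy {V : Type*} (G : SimpleGraph V) (k : ℕ) : ℕ :=
  grundyVal k G.neighborSet G.neighborSet

/-- The `d`-dimensional hypercube: vertices are 0-1 sequences of length `d`, adjacent iff
they differ in exactly one position. -/
def hypercubeGraph (d : ℕ) : SimpleGraph (Fin d → Bool) where
  Adj x y := (Finset.univ.filter fun i => x i ≠ y i).card = 1
  symm := by
    constructor
    intro x y h
    simpa [ne_comm] using h
  loopless := by
    constructor
    intro x h
    simp at h

/-!
In a `d`-regular graph on `n` vertices, the vertex `u` footprinted by the last entry of a
`k`-`L`-sequence has at most `k - 1` neighbours among the earlier entries, hence at least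
`d - k + 1` outside them, so every `k`-`L`-sequence has length at most `n + k - d`.

For the matching lower bound, view `Q_{d+1}` as two copies of `Q_d` joined by a perfect matching.
List the top copy first, each vertex footprinting its partner in the bottom copy (which no
earlier vertex is adjacent to), and then a `k`-`L`-sequence of the bottom copy: its footprints
now also see their top partners, so the result is a `(k+1)`-`L`-sequence with `2^d` more
entries. Starting from sequences attaining the bound in `Q_2` and `Q_3` for `k = 1`, checked by
`decide`, this gives the bound for `k = d - 1` and `k = d - 2` in every `Q_d`, `d > 2`.
-/
section GrundySeq

variable {V : Type*}

theorem List.Nodup.ncard_setOf_mem_and {l : List V} (hl : l.Nodup) (p : V → Prop)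
    [DecidablePred p] : {w | w ∈ l ∧ p w}.ncard = l.countP p := by
  classical
  have hset : {w | w ∈ l ∧ p w} = ↑(l.filter p).toFinset := by ext; simp
  rw [hset, Set.ncard_coe_finset, List.toFinset_card_of_nodup (hl.filter _),
    List.countP_eq_length_filter]

theorem List.Nodup.ncard_setOf_mem {l : List V} (hl : l.Nodup) :
    {w | w ∈ l}.ncard = l.length := by
  simpa using hl.ncard_setOf_mem_and (fun _ => True)

variable {k : ℕ} {N₁ N₂ : V → Set V}

theorem isGrundySeq_nil : IsGrundySeq k N₁ N₂ [] :=
  ⟨List.nodup_nil, fun _ hi => absurd hi (by simp)⟩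

theorem isGrundySeq_append_singleton {S : List V} {v : V} :
    IsGrundySeq k N₁ N₂ (S ++ [v]) ↔
      IsGrundySeq k N₁ N₂ S ∧ v ∉ S ∧ ∃ u ∈ N₁ v, {w | w ∈ S ∧ u ∈ N₂ w}.ncard < k := by
  simp only [IsGrundySeq, List.get_eq_getElem, List.length_append, List.length_singleton]
  rw [show (S ++ [v]).Nodup ↔ v ∉ S ∧ S.Nodup by simpa using List.nodup_concat S v]
  constructor
  · rintro ⟨⟨hv, hS⟩, hstep⟩
    refine ⟨⟨hS, fun i hi => ?_⟩, hv, ?_⟩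
    · simpa [List.getElem_append_left hi, List.take_append_of_le_length hi.le]
        using hstep i (by omega)
    · simpa [List.take_left'] using hstep S.length (by omega)
  · rintro ⟨⟨hS, hstep⟩, hv, hlast⟩
    refine ⟨⟨hv, hS⟩, fun i hi => ?_⟩
    rcases Nat.lt_succ_iff_lt_or_eq.1 hi with hi | rfl
    · simpa [List.getElem_append_left hi, List.take_append_of_le_length hi.le] using hstep i hi
    · simpa [List.take_left'] using hlast

theorem isGrundySeq_iff_countP (G : SimpleGraph V) [DecidableRel G.Adj] {S : List V} :
    IsGrundySeq k (closedNbhd G) G.neighborSet S ↔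
      S.Nodup ∧ ∀ (i : ℕ) (hi : i < S.length),
        ∃ u, (u = S[i] ∨ G.Adj S[i] u) ∧ (S.take i).countP (fun w => G.Adj w u) < k := by
  refine and_congr_right fun hS => forall₂_congr fun i hi => exists_congr fun u => ?_
  rw [← (hS.sublist (List.take_sublist i S)).ncard_setOf_mem_and]
  simp [closedNbhd]

theorem IsGrundySeq.length_add_le [Finite V] [Nonempty V] {G : SimpleGraph V} {δ : ℕ}
    (hδ : ∀ v, δ ≤ (G.neighborSet v).ncard) {S : List V}
    (hS : IsGrundySeq k N₁ G.neighborSet S) : S.length + δ ≤ Nat.card V + k := by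
  obtain rfl | ⟨T, v, rfl⟩ := S.eq_nil_or_concat
  · have := (hδ (Classical.arbitrary V)).trans (Set.ncard_le_card _)
    simp only [List.length_nil]
    omega
  rw [List.concat_eq_append, isGrundySeq_append_singleton] at hS
  obtain ⟨hT, -, u, -, hu⟩ := hS
  have hcover : G.neighborSet u ⊆ {w | w ∈ T ∧ u ∈ G.neighborSet w} ∪ {w | w ∈ T}ᶜ := by
    intro w hw
    by_cases hwT : w ∈ T
    · exact Or.inl ⟨hwT, hw.symm⟩
    · exact Or.inr hwT
  have hout : ({w | w ∈ T}ᶜ : Set V).ncard = Nat.card V - T.length := by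
    rw [Set.ncard_compl, hT.1.ncard_setOf_mem]
  have hTle : T.length ≤ Nat.card V := by
    rw [← hT.1.ncard_setOf_mem]; exact Set.ncard_le_card _
  have := (hδ u).trans ((Set.ncard_le_ncard hcover).trans (Set.ncard_union_le _ _))
  rw [List.length_concat]
  omega

theorem grundyVal_eq_length {S : List V} (hS : IsGrundySeq k N₁ N₂ S)
    (hmax : ∀ T, IsGrundySeq k N₁ N₂ T → T.length ≤ S.length) :
    grundyVal k N₁ N₂ = S.length :=
  IsGreatest.csSup_eq ⟨⟨S, hS, rfl⟩, by rintro _ ⟨T, hT, rfl⟩; exact hmax T hT⟩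

end GrundySeq

abbrev IsLGrundySeq {V : Type*} (G : SimpleGraph V) (k : ℕ) (S : List V) : Prop :=
  IsGrundySeq k (closedNbhd G) G.neighborSet S

namespace hypercubeGraph

instance (d : ℕ) : DecidableRel (hypercubeGraph d).Adj := fun x y =>
  inferInstanceAs (Decidable ((Finset.univ.filter fun i => x i ≠ y i).card = 1))

variable {d : ℕ}

theorem adj_cons {a b : Bool} {x y : Fin d → Bool} :
    (hypercubeGraph (d + 1)).Adj (Fin.cons a x) (Fin.cons b y) ↔
      a = b ∧ (hypercubeGraph d).Adj x y ∨ a ≠ b ∧ x = y := by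
  change (Finset.univ.filter _).card = 1 ↔ _ ∨ _
  rw [Fin.card_filter_univ_succ]
  simp only [Fin.cons_zero, Fin.cons_succ]
  change _ ↔ _ ∧ (Finset.univ.filter _).card = 1 ∨ _
  split_ifs with hab
  · simp only [hab, ne_eq, not_false_eq_true, false_and, true_and, false_or]
    rw [Nat.add_eq_right, Finset.card_eq_zero, Finset.filter_eq_empty_iff]
    simp [funext_iff]
  · simp_all

theorem neighborSet_cons (a : Bool) (x : Fin d → Bool) :
    (hypercubeGraph (d + 1)).neighborSet (Fin.cons a x) =
      insert (Fin.cons (!a) x) (Fin.cons a '' (hypercubeGraph d).neighborSet x) := by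
  ext z
  induction z using Fin.consCases with
  | cons b y =>
    simp only [SimpleGraph.mem_neighborSet, adj_cons, Set.mem_insert_iff, Set.mem_image,
      Fin.cons_inj]
    cases a <;> cases b <;> simp [eq_comm]

theorem ncard_neighborSet (x : Fin d → Bool) : ((hypercubeGraph d).neighborSet x).ncard = d := by
  induction d with
  | zero =>
    rw [Set.ncard_eq_zero]
    ext y
    simp [hypercubeGraph]
  | succ d ih =>
    induction x using Fin.consCases with
    | cons a x =>
      rw [neighborSet_cons, Set.ncard_insert_of_notMem (by simp),
        Set.ncard_image_of_injective _ (Fin.cons_right_injective (α := fun _ => Bool) a), ih]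

theorem cons_mem_closedNbhd_cons {a : Bool} {u v : Fin d → Bool} :
    Fin.cons a u ∈ closedNbhd (hypercubeGraph (d + 1)) (Fin.cons a v) ↔
      u ∈ closedNbhd (hypercubeGraph d) v := by
  simp [closedNbhd, adj_cons, Fin.cons_inj]

theorem isLGrundySeq_map_cons_true {k : ℕ} (hk : 0 < k) {L : List (Fin d → Bool)}
    (hL : L.Nodup) : IsLGrundySeq (hypercubeGraph (d + 1)) k (L.map (Fin.cons true)) := by
  induction L using List.reverseRecOn with
  | nil => exact isGrundySeq_nil
  | append_singleton L x ih =>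
    obtain ⟨hx, hL⟩ := (List.concat_eq_append ▸ List.nodup_concat L x).1 hL
    rw [List.map_append, List.map_singleton, IsLGrundySeq, isGrundySeq_append_singleton]
    refine ⟨ih hL, by simpa [Fin.cons_inj] using hx, Fin.cons false x, ?_, ?_⟩
    · simp [closedNbhd, adj_cons]
    · refine ((Set.ncard_eq_zero).2 <| Set.eq_empty_iff_forall_notMem.2 ?_).trans_lt hk
      rintro _ ⟨hw, hadj⟩
      obtain ⟨y, hy, rfl⟩ := List.mem_map.1 hw
      obtain rfl : y = x := by simpa [adj_cons] using hadj
      exact hx hy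

theorem isLGrundySeq_succ_layers {k : ℕ} {L S : List (Fin d → Bool)} (hL : L.Nodup)
    (hS : IsLGrundySeq (hypercubeGraph d) k S) :
    IsLGrundySeq (hypercubeGraph (d + 1)) (k + 1)
      (L.map (Fin.cons true) ++ S.map (Fin.cons false)) := by
  induction S using List.reverseRecOn with
  | nil => simpa using isLGrundySeq_map_cons_true k.succ_pos hL
  | append_singleton S v ih =>
    rw [IsLGrundySeq, isGrundySeq_append_singleton] at hS
    obtain ⟨hS, hv, u, hu, hcount⟩ := hS
    rw [List.map_append, List.map_singleton, ← List.append_assoc, IsLGrundySeq,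
      isGrundySeq_append_singleton]
    refine ⟨ih hS, by simpa [Fin.cons_inj] using hv, Fin.cons false u,
      cons_mem_closedNbhd_cons.2 hu, ?_⟩
    have hsub : {w | w ∈ L.map (Fin.cons true) ++ S.map (Fin.cons false) ∧
        Fin.cons false u ∈ (hypercubeGraph (d + 1)).neighborSet w} ⊆
        insert (Fin.cons true u)
          (Fin.cons false '' {w | w ∈ S ∧ u ∈ (hypercubeGraph d).neighborSet w}) := by
      rintro _ ⟨hw, hadj⟩
      rcases List.mem_append.1 hw with hw | hw
      · obtain ⟨y, -, rfl⟩ := List.mem_map.1 hw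
        obtain rfl : y = u := by simpa [adj_cons] using hadj
        exact Set.mem_insert _ _
      · obtain ⟨y, hy, rfl⟩ := List.mem_map.1 hw
        exact Set.mem_insert_of_mem _ ⟨y, ⟨hy, by simpa [adj_cons] using hadj⟩, rfl⟩
    calc _ ≤ _ := Set.ncard_le_ncard hsub
      _ ≤ _ + 1 := Set.ncard_insert_le _ _
      _ < k + 1 := by
        rw [Set.ncard_image_of_injective _ (Fin.cons_right_injective (α := fun _ => Bool) false)]
        omega

theorem exists_isLGrundySeq_of_le {k : ℕ}
    (h : ∃ S, IsLGrundySeq (hypercubeGraph d) k S ∧ S.length + d = 2 ^ d + k) {d' : ℕ}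
    (hd : d ≤ d') :
    ∃ S, IsLGrundySeq (hypercubeGraph d') (k + (d' - d)) S ∧
      S.length + d' = 2 ^ d' + (k + (d' - d)) := by
  induction d', hd using Nat.le_induction with
  | base => simpa using h
  | succ d' hd ih =>
    obtain ⟨S, hS, hlen⟩ := ih
    refine ⟨Finset.univ.toList.map (Fin.cons true) ++ S.map (Fin.cons false), ?_, ?_⟩
    · rw [show k + (d' + 1 - d) = k + (d' - d) + 1 by omega]
      exact isLGrundySeq_succ_layers (Finset.nodup_toList _) hS
    · simp only [List.length_append, List.length_map, Finset.length_toList, Finset.card_univ,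
        Fintype.card_fun, Fintype.card_bool, Fintype.card_fin, pow_succ]
      omega

theorem kLGrundy_add_eq {k : ℕ}
    (h : ∃ S, IsLGrundySeq (hypercubeGraph d) k S ∧ S.length + d = 2 ^ d + k) :
    kLGrundy (hypercubeGraph d) k + d = 2 ^ d + k := by
  obtain ⟨S, hS, hlen⟩ := h
  rw [kLGrundy, grundyVal_eq_length hS fun T hT => ?_, hlen]
  have := IsGrundySeq.length_add_le (fun x => (ncard_neighborSet x).ge) hT
  simp only [Nat.card_eq_fintype_card, Fintype.card_fun, Fintype.card_bool,
    Fintype.card_fin] at this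
  omega

end hypercubeGraph

/-- For `d > 2`, `γ_gr^{L,d-1}(Q_d) = 2^d - 1` and `γ_gr^{L,d-2}(Q_d) = 2^d - 2`. -/
theorem kLGrundy_hypercube_top_cases (d : ℕ) (hd : 2 < d) :
    kLGrundy (hypercubeGraph d) (d - 1) = 2 ^ d - 1 ∧
      kLGrundy (hypercubeGraph d) (d - 2) = 2 ^ d - 2 := by
  have hQ₂ : ∃ S, IsLGrundySeq (hypercubeGraph 2) 1 S ∧ S.length + 2 = 2 ^ 2 + 1 :=
    ⟨[![false, false], ![true, true], ![true, false]],
      (isGrundySeq_iff_countP _).2 (by decide), rfl⟩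
  have hQ₃ : ∃ S, IsLGrundySeq (hypercubeGraph 3) 1 S ∧ S.length + 3 = 2 ^ 3 + 1 :=
    ⟨[![false, false, false], ![true, true, false], ![true, false, true],
      ![true, false, false], ![false, true, true], ![false, true, false]],
      (isGrundySeq_iff_countP _).2 (by decide), rfl⟩
  have h₁ := hypercubeGraph.kLGrundy_add_eq (hypercubeGraph.exists_isLGrundySeq_of_le hQ₂ hd.le)
  have h₂ := hypercubeGraph.kLGrundy_add_eq (hypercubeGraph.exists_isLGrundySeq_of_le hQ₃ hd)
  rw [show 1 + (d - 2) = d - 1 by omega] at h₁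
  rw [show 1 + (d - 3) = d - 2 by omega] at h₂
  omega
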